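/- For η > 2 and y ≥ 0, the function G(y) = y · ₂F₁(1, 1-2/η; 2-2/η; -y) is concave in y (equivalently, -G(y) is convex). -/
import Mathlib


open MeasureTheory Real

/-- The Gauss hypergeometric function `₂F₁(1, 1-2/η; 2-2/η; -y)`, via its Euler
integral representation, valid for `η > 2` and `y ≥ 0`. -/
noncomputable def gauss2F1 (η y : ℝ) : ℝ :=
  (1 - 2 / η) * ∫ t in Set.Ioo (0 : ℝ) 1, t ^ (-(2 / η)) / (1 + t * y)

lemma rpow_integrable (η : ℝ) (hη : 2 < η) :
    IntegrableOn (fun x : ℝ => x ^ (-(2 / η))) (Set.Ioo 0 1) := by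
  have h : (-1 : ℝ) < -(2 / η) := by
    have : 2 / η < 1 := (div_lt_one (by linarith)).2 (by linarith)
    linarith
  have := intervalIntegral.intervalIntegrable_rpow' (a := 0) (b := 1) h
  rw [intervalIntegrable_iff_integrableOn_Ioc_of_le (by norm_num)] at this
  exact this.mono_set Set.Ioo_subset_Ioc_self

lemma F_integrable (η y : ℝ) (hη : 2 < η) (hy : 0 ≤ y) :
    IntegrableOn (fun x : ℝ => x ^ (-(2 / η)) * (y / (1 + x * y))) (Set.Ioo 0 1) := by
  have hmeas : AEStronglyMeasurable (fun x : ℝ => x ^ (-(2 / η)) * (y / (1 + x * y)))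
      (volume.restrict (Set.Ioo 0 1)) := by
    apply ContinuousOn.aestronglyMeasurable _ measurableSet_Ioo
    apply ContinuousOn.mul
    · exact fun x hx => (Real.continuousAt_rpow_const x _ (Or.inl (ne_of_gt hx.1))).continuousWithinAt
    · apply ContinuousOn.div continuousOn_const
      · fun_prop
      · intro x hx
        have : 0 < 1 + x * y := by nlinarith [hx.1]
        exact this.ne'
  have hbound := (rpow_integrable η hη).mul_const y
  refine Integrable.mono' hbound hmeas ?_
  filter_upwards [ae_restrict_mem measurableSet_Ioo] with x hx
  have hx0 : 0 < x := hx.1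
  have hD : (1 : ℝ) ≤ 1 + x * y := by nlinarith
  have h1 : 0 ≤ y / (1 + x * y) := div_nonneg hy (by linarith)
  have h2 : y / (1 + x * y) ≤ y := by
    rw [div_le_iff₀ (by linarith)]; nlinarith
  rw [Real.norm_eq_abs, abs_of_nonneg (mul_nonneg (Real.rpow_nonneg hx0.le _) h1)]
  exact mul_le_mul_of_nonneg_left h2 (Real.rpow_nonneg hx0.le _)

lemma G_eq (η y : ℝ) :
    y * gauss2F1 η y =
      (1 - 2 / η) * ∫ x in Set.Ioo (0 : ℝ) 1, x ^ (-(2 / η)) * (y / (1 + x * y)) := by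
  unfold gauss2F1
  rw [show y * ((1 - 2 / η) * ∫ x in Set.Ioo (0 : ℝ) 1, x ^ (-(2 / η)) / (1 + x * y))
      = (1 - 2 / η) * (y * ∫ x in Set.Ioo (0 : ℝ) 1, x ^ (-(2 / η)) / (1 + x * y)) by ring,
    ← integral_const_mul]
  congr 1
  apply integral_congr_ae
  filter_upwards with x
  ring

lemma key_concave (c : ℝ) (hc : 0 ≤ c) :
    ConcaveOn ℝ (Set.Ici (0 : ℝ)) (fun y => y / (1 + c * y)) := by
  refine ⟨convex_Ici 0, fun a ha b hb s t hs ht hst => ?_⟩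
  simp only [smul_eq_mul]
  have ha' : (0:ℝ) ≤ a := ha
  have hb' : (0:ℝ) ≤ b := hb
  have hDa : 0 < 1 + c * a := by nlinarith
  have hDb : 0 < 1 + c * b := by nlinarith
  have hD : 0 < 1 + c * (s * a + t * b) := by nlinarith [mul_nonneg (mul_nonneg hc hs) ha', mul_nonneg (mul_nonneg hc ht) hb']
  rw [← mul_div_assoc, ← mul_div_assoc, div_add_div _ _ hDa.ne' hDb.ne', div_le_div_iff₀ (by positivity) hD]
  have ht' : t = 1 - s := by linarith
  subst ht'
  nlinarith [mul_nonneg (mul_nonneg (mul_nonneg hc hs) ht) (sq_nonneg (a - b))]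

/-- For `η > 2`, the function `G(y) = y · ₂F₁(1, 1-2/η; 2-2/η; -y)`
is concave on `[0, ∞)` (equivalently, `-G` is convex there). -/
theorem stmt7 (η : ℝ) (hη : 2 < η) :
    ConcaveOn ℝ (Set.Ici (0 : ℝ)) (fun y => y * gauss2F1 η y)
      ∧ ConvexOn ℝ (Set.Ici (0 : ℝ)) (fun y => -(y * gauss2F1 η y)) := by
  have hc0 : (0:ℝ) < 1 - 2 / η := by
    have : 2 / η < 1 := (div_lt_one (by linarith)).2 (by linarith)
    linarith
  have hconc : ConcaveOn ℝ (Set.Ici (0 : ℝ)) (fun y => y * gauss2F1 η y) := by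
    refine ⟨convex_Ici 0, fun a ha b hb s t hs ht hst => ?_⟩
    simp only [smul_eq_mul, G_eq]
    have ha' : (0:ℝ) ≤ a := ha
    have hb' : (0:ℝ) ≤ b := hb
    have hab : (0:ℝ) ≤ s * a + t * b := by positivity
    have Ia := F_integrable η a hη ha'
    have Ib := F_integrable η b hη hb'
    have Iab := F_integrable η (s * a + t * b) hη hab
    have hmono : ∀ x ∈ Set.Ioo (0:ℝ) 1,
        s * (x ^ (-(2 / η)) * (a / (1 + x * a))) + t * (x ^ (-(2 / η)) * (b / (1 + x * b)))
          ≤ x ^ (-(2 / η)) * ((s * a + t * b) / (1 + x * (s * a + t * b))) := by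
      intro x hx
      have hk := (key_concave x hx.1.le).2 ha hb hs ht hst
      simp only [smul_eq_mul] at hk
      have hxp : 0 ≤ x ^ (-(2 / η)) := Real.rpow_nonneg hx.1.le _
      nlinarith [mul_le_mul_of_nonneg_left hk hxp]
    calc s * ((1 - 2 / η) * ∫ x in Set.Ioo (0:ℝ) 1, x ^ (-(2 / η)) * (a / (1 + x * a)))
          + t * ((1 - 2 / η) * ∫ x in Set.Ioo (0:ℝ) 1, x ^ (-(2 / η)) * (b / (1 + x * b)))
        = (1 - 2 / η) * ∫ x in Set.Ioo (0:ℝ) 1,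
            (s * (x ^ (-(2 / η)) * (a / (1 + x * a)))
              + t * (x ^ (-(2 / η)) * (b / (1 + x * b)))) := by
          rw [integral_add (Ia.const_mul s) (Ib.const_mul t), integral_const_mul,
            integral_const_mul]
          ring
      _ ≤ (1 - 2 / η) * ∫ x in Set.Ioo (0:ℝ) 1,
            x ^ (-(2 / η)) * ((s * a + t * b) / (1 + x * (s * a + t * b))) := by
          apply mul_le_mul_of_nonneg_left _ hc0.le
          apply setIntegral_mono_on ((Ia.const_mul s).add (Ib.const_mul t)) Iab
            measurableSet_Ioo hmono
  exact ⟨hconc, hconc.neg⟩
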